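/- Let x, y in R^d, z = x + y, and let SM(x,y) = exp(x^T y). The variance of the single-sample positive random feature estimator exp(-(||x||²+||y||²)/2) exp(ω^T z) for ω ~ N(0, I_d) equals exp(||z||²) · SM(x,y)² · (1 - exp(-||z||²)). -/

import Mathlib

/-!
For `ω ~ N(0, I_d)` the integrand `exp (ωᵀz)` factorises into one-dimensional Gaussian moment
generating functions, so `E[exp (ωᵀz)] = exp (‖z‖² / 2)`. The second moment of the estimator is
the same formula at `2z`, and the variance is exponential arithmetic with
`‖z‖² = ‖x‖² + 2 xᵀy + ‖y‖²`.
-/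

open MeasureTheory ProbabilityTheory

noncomputable def stdGaussian (d : ℕ) : Measure (Fin d → ℝ) :=
  Measure.pi fun _ => gaussianReal 0 1

theorem integral_exp_sum_mul_pi {ι : Type*} [Fintype ι] (μ : ι → Measure ℝ)
    [∀ i, SigmaFinite (μ i)] (z : ι → ℝ) :
    ∫ ω, Real.exp (∑ i, ω i * z i) ∂Measure.pi μ = ∏ i, mgf id (μ i) (z i) := by
  simp_rw [Real.exp_sum]
  rw [integral_fintype_prod_eq_prod (fun i t => Real.exp (t * z i))]
  simp only [mgf, id, mul_comm]

theorem integral_exp_sum_mul_stdGaussian (d : ℕ) (z : Fin d → ℝ) :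
    ∫ ω, Real.exp (∑ i, ω i * z i) ∂stdGaussian d = Real.exp ((∑ i, z i ^ 2) / 2) := by
  rw [_root_.stdGaussian, integral_exp_sum_mul_pi, Finset.sum_div, Real.exp_sum]
  simp [mgf_id_gaussianReal]

/-- Variance of the single-sample positive random feature estimator
`Ŝ(ω) = exp(-(‖x‖²+‖y‖²)/2) exp(ωᵀz)`, `z = x + y`, for `ω ~ N(0,I_d)` equals
`exp(‖z‖²) ⬝ SM(x,y)² ⬝ (1 - exp(-‖z‖²))` where `SM(x,y) = exp(xᵀy)`. -/
theorem positive_feature_estimator_variance (d : ℕ) (x y : Fin d → ℝ) :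
    (∫ ω, (Real.exp (-((∑ i, x i ^ 2) + ∑ i, y i ^ 2) / 2) *
            Real.exp (∑ i, ω i * (x i + y i))) ^ 2 ∂(stdGaussian d)) -
      (∫ ω, Real.exp (-((∑ i, x i ^ 2) + ∑ i, y i ^ 2) / 2) *
            Real.exp (∑ i, ω i * (x i + y i)) ∂(stdGaussian d)) ^ 2 =
      Real.exp (∑ i, (x i + y i) ^ 2) * Real.exp (∑ i, x i * y i) ^ 2 *
        (1 - Real.exp (-∑ i, (x i + y i) ^ 2)) := by
  have h_norm_sq : ∑ i, (x i + y i) ^ 2 = ∑ i, x i ^ 2 + 2 * ∑ i, x i * y i + ∑ i, y i ^ 2 := by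
    simp only [Finset.mul_sum, ← Finset.sum_add_distrib]
    exact Finset.sum_congr rfl fun i _ => by ring
  have h_sq (ω : Fin d → ℝ) : Real.exp (∑ i, ω i * (x i + y i)) ^ 2 =
      Real.exp (∑ i, ω i * (2 * (x i + y i))) := by
    rw [← Real.exp_nat_mul, Finset.mul_sum]
    exact congrArg Real.exp (Finset.sum_congr rfl fun i _ => by ring)
  simp_rw [mul_pow, h_sq, integral_const_mul, integral_exp_sum_mul_stdGaussian]
  simp only [mul_pow, ← Finset.mul_sum, ← Real.exp_nat_mul, ← Real.exp_add, mul_sub, mul_one]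
  rw [h_norm_sq]
  congr 2 <;> push_cast <;> ring
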